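/- arXiv:2204.12764 — 4 statements merged into one kernel-verified Lean document; each statement's English description precedes it below -/
import Mathlib

section
/- Define the parent function ρ*(t) = t − 2^{δ(t)} for t ∈ {1,…,T}, where δ(t) = max{i ≥ 0 : 2^i divides t}. Then for every t ∈ {1,…,T}, the cut of ρ* at t, namely cut_{ρ*}(t) = {s ∈ {1,…,T} : ρ*(s) ≤ t < s}, has cardinality at most ⌊log₂ T⌋ + 1. -/
/-!
A vertex `s` lies in the cut at `t` exactly when `t < s ≤ t + 2^δ(s)`. Two such vertices with the
same valuation `k` are multiples of `2^k` in an interval of length `2^k`, hence equal; so `δ` is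
injective on the cut, and it takes values in `{0, …, ⌊log₂ T⌋}` because `2^δ(s) ≤ s ≤ T`.
-/

/-- The multi-scale random walk parent function `ρ*(t) = t − 2^{δ(t)}`, where
`δ(t)` is the 2-adic valuation of `t`. -/
def msParent (t : ℕ) : ℕ := t - 2 ^ (padicValNat 2 t)

def cut (ρ : ℕ → ℕ) (T t : ℕ) : Finset ℕ :=
  (Finset.Icc 1 T).filter (fun s => ρ s ≤ t ∧ t < s)

theorem Nat.eq_of_dvd_of_mem_Ioc {n t a b : ℕ} (ha : n ∣ a) (hb : n ∣ b)
    (ha' : a ∈ Set.Ioc t (t + n)) (hb' : b ∈ Set.Ioc t (t + n)) : a = b := by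
  have hab : a ≡ b [MOD n] :=
    (Nat.modEq_zero_iff_dvd.2 ha).trans (Nat.modEq_zero_iff_dvd.2 hb).symm
  obtain ⟨hta, hat⟩ := ha'
  obtain ⟨htb, hbt⟩ := hb'
  exact le_antisymm (hab.le_of_lt_add (by omega)) (hab.symm.le_of_lt_add (by omega))

theorem msParent_le_iff {s t : ℕ} : msParent s ≤ t ↔ s ≤ t + 2 ^ padicValNat 2 s :=
  Nat.sub_le_iff_le_add

theorem mem_Ioc_of_mem_cut_msParent {T t s : ℕ} (hs : s ∈ cut msParent T t) :
    s ∈ Set.Ioc t (t + 2 ^ padicValNat 2 s) := by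
  obtain ⟨-, hparent, hts⟩ := Finset.mem_filter.1 hs
  exact ⟨hts, msParent_le_iff.1 hparent⟩

theorem padicValNat_injOn_cut_msParent (T t : ℕ) :
    Set.InjOn (padicValNat 2) (cut msParent T t) := by
  intro a ha b hb hab
  have hb' := mem_Ioc_of_mem_cut_msParent hb
  have hdvd : 2 ^ padicValNat 2 a ∣ b := hab ▸ pow_padicValNat_dvd
  rw [← hab] at hb'
  exact Nat.eq_of_dvd_of_mem_Ioc pow_padicValNat_dvd hdvd
    (mem_Ioc_of_mem_cut_msParent ha) hb'

theorem padicValNat_lt_of_mem_cut (p : ℕ) {ρ : ℕ → ℕ} {T t s : ℕ} (hs : s ∈ cut ρ T t) :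
    padicValNat p s < Nat.log p T + 1 := by
  have hsT : s ≤ T := (Finset.mem_Icc.1 (Finset.mem_filter.1 hs).1).2
  exact Nat.lt_succ_of_le ((padicValNat_le_nat_log s).trans (Nat.log_mono_right hsT))

theorem card_cut_msParent_le (T t : ℕ) : (cut msParent T t).card ≤ Nat.log 2 T + 1 := by
  calc (cut msParent T t).card
      ≤ (Finset.range (Nat.log 2 T + 1)).card :=
        Finset.card_le_card_of_injOn (padicValNat 2)
          (fun _ hs => Finset.mem_range.2 (padicValNat_lt_of_mem_cut 2 hs))
          (padicValNat_injOn_cut_msParent T t)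
    _ = Nat.log 2 T + 1 := Finset.card_range _

theorem msParent_cut_card_le_general (T : ℕ) :
    ∀ t ∈ Finset.Icc 1 T,
      ((Finset.Icc 1 T).filter (fun s => msParent s ≤ t ∧ t < s)).card
        ≤ Nat.log 2 T + 1 :=
  fun t _ => card_cut_msParent_le T t

/-- The cut of `ρ*` at any `t ∈ [T]` has cardinality at most `⌊log₂ T⌋ + 1`. -/
theorem msParent_cut_card_le (T : ℕ) (hT : 1 ≤ T) :
    ∀ t ∈ Finset.Icc 1 T,
      ((Finset.Icc 1 T).filter (fun s => msParent s ≤ t ∧ t < s)).card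
        ≤ Nat.log 2 T + 1 :=
  msParent_cut_card_le_general T
end

section
/- Consider the 2-armed bandit with composite anonymous feedback where the adversary, depending on a uniform random bit Z ∈ {1,2}, sets at odd rounds t: loss of arm Z equal to 0 and of the other arm equal to 1, fully delayed by one round; and at even rounds t: both arms' losses equal to 𝟙[a_{t−1} = Z], undelayed. Then any deterministic learner observes the fixed sequence 0,1,0,1,… regardless of its actions, and its expected pseudo-regret 𝔼[∑_{t=1}^T l_t(A_t) − min_y ∑_{t=1}^T l_t(A_{t−1}, y)] is at least T/4. -/
/-!
At every even round `t` the feedback is `𝟙[a_{t-1} ≠ Z] + 𝟙[a_{t-1} = Z] = 1`, so the learner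
sees `0,1,0,1,…` whatever `Z` is. Even-round losses do not depend on the arm played, so they
cancel in the pseudo-regret, which for a fixed `Z` is the number of odd rounds at which the
learner missed arm `Z`. Since each odd round is a miss for exactly one value of `Z`, the two
regrets add up to the number of odd rounds, which is at least `T / 2`.
-/

open Finset

noncomputable def twoArmLoss (z : Fin 2) (A : ℕ → Fin 2) (t : ℕ) (a : Fin 2) : ℝ :=
  if Odd t then (if a = z then 0 else 1) else (if A (t - 1) = z then 1 else 0)

section TwoArmLoss

variable (z : Fin 2) (A : ℕ → Fin 2)

lemma twoArmLoss_pred_add_self_of_not_odd {t : ℕ} (ht : 1 ≤ t) (he : ¬Odd t) :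
    twoArmLoss z A (t - 1) (A (t - 1)) + twoArmLoss z A t (A t) = 1 := by
  have hodd : Odd (t - 1) := by
    rw [Nat.not_odd_iff_even] at he
    exact Nat.Even.sub_odd ht he odd_one
  simp only [twoArmLoss, hodd, he, if_true, if_false]
  split_ifs <;> norm_num

lemma sum_twoArmLoss (s : Finset ℕ) (f : ℕ → Fin 2) :
    ∑ t ∈ s, twoArmLoss z A t (f t)
      = ∑ t ∈ s with Odd t, (if f t = z then (0 : ℝ) else 1)
        + ∑ t ∈ s with ¬Odd t, (if A (t - 1) = z then (1 : ℝ) else 0) := by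
  rw [← sum_filter_add_sum_filter_not s Odd]
  congr 1 <;> refine sum_congr rfl fun t ht => ?_ <;> simp_all [twoArmLoss]

/-- The best fixed arm in hindsight is `z`; it suffers only the even-round losses. -/
lemma min_sum_twoArmLoss (s : Finset ℕ) :
    min (∑ t ∈ s, twoArmLoss z A t 0) (∑ t ∈ s, twoArmLoss z A t 1)
      = ∑ t ∈ s with ¬Odd t, (if A (t - 1) = z then (1 : ℝ) else 0) := by
  have hge (b : Fin 2) :
      ∑ t ∈ s with ¬Odd t, (if A (t - 1) = z then (1 : ℝ) else 0)
        ≤ ∑ t ∈ s, twoArmLoss z A t b := by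
    rw [sum_twoArmLoss]
    exact le_add_of_nonneg_left (sum_nonneg fun _ _ => by split_ifs <;> norm_num)
  have hz : ∑ t ∈ s, twoArmLoss z A t z
      = ∑ t ∈ s with ¬Odd t, (if A (t - 1) = z then (1 : ℝ) else 0) := by
    simp [sum_twoArmLoss]
  refine le_antisymm ?_ (le_min (hge 0) (hge 1))
  rw [← hz]
  fin_cases z
  exacts [min_le_left _ _, min_le_right _ _]

lemma pseudoRegret_twoArmLoss (s : Finset ℕ) :
    ∑ t ∈ s, twoArmLoss z A t (A t)
        - min (∑ t ∈ s, twoArmLoss z A t 0) (∑ t ∈ s, twoArmLoss z A t 1)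
      = ∑ t ∈ s with Odd t, (if A t = z then (0 : ℝ) else 1) := by
  rw [min_sum_twoArmLoss, sum_twoArmLoss]
  ring

end TwoArmLoss

lemma sum_fin_two_ite_ne (a : Fin 2) : ∑ z : Fin 2, (if a = z then (0 : ℝ) else 1) = 1 := by
  fin_cases a <;> simp [Fin.sum_univ_two]

/-- Every `t ∈ [1, T]` is odd or the successor of an odd number in `[1, T]`. -/
lemma le_two_mul_card_filter_odd_Icc (T : ℕ) : T ≤ 2 * #{t ∈ Icc 1 T | Odd t} := by
  set O := {t ∈ Icc 1 T | Odd t}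
  have hcover : Icc 1 T ⊆ O ∪ O.image (· + 1) := by
    intro t ht
    rw [mem_Icc] at ht
    rcases Nat.even_or_odd t with he | ho
    · refine mem_union_right _ (mem_image.2 ⟨t - 1, ?_, by omega⟩)
      have : Odd (t - 1) := Nat.Even.sub_odd ht.1 he odd_one
      simp only [O, mem_filter, mem_Icc]
      exact ⟨⟨this.pos, by omega⟩, this⟩
    · exact mem_union_left _ (mem_filter.2 ⟨mem_Icc.2 ht, ho⟩)
  calc T = #(Icc 1 T) := by simp
    _ ≤ #(O ∪ O.image (· + 1)) := card_le_card hcover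
    _ ≤ #O + #(O.image (· + 1)) := card_union_le _ _
    _ ≤ 2 * #O := by have := card_image_le (s := O) (f := (· + 1)); omega

theorem two_armed_delayed_lower_bound_general (T : ℕ)
    (A : ℕ → Fin 2) :
    -- the observed feedback (odd rounds: fully delayed, hence 0; even rounds: the delayed
    -- odd loss plus the immediate even loss) is `0,1,0,1,…`, independent of `z`
    (∀ z : Fin 2, ∀ t ∈ Finset.Icc 1 T,
        (if Odd t then (0 : ℝ)
          else twoArmLoss z A (t - 1) (A (t - 1)) + twoArmLoss z A t (A t))
          = if Odd t then 0 else 1)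
    ∧
    -- the expected pseudo-regret is at least `T/4`
    (T / 4 : ℝ) ≤ (1 / 2) * ∑ z : Fin 2,
        ((∑ t ∈ Finset.Icc 1 T, twoArmLoss z A t (A t))
          - min (∑ t ∈ Finset.Icc 1 T, twoArmLoss z A t 0)
                (∑ t ∈ Finset.Icc 1 T, twoArmLoss z A t 1)) := by
  refine ⟨fun z t ht => ?_, ?_⟩
  · split_ifs with ho
    · rfl
    · exact twoArmLoss_pred_add_self_of_not_odd z A (mem_Icc.1 ht).1 ho
  · have hsum : ∑ z : Fin 2, (∑ t ∈ Icc 1 T, twoArmLoss z A t (A t)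
          - min (∑ t ∈ Icc 1 T, twoArmLoss z A t 0) (∑ t ∈ Icc 1 T, twoArmLoss z A t 1))
        = #{t ∈ Icc 1 T | Odd t} := by
      simp_rw [pseudoRegret_twoArmLoss]
      rw [sum_comm, sum_congr rfl fun t _ => sum_fin_two_ite_ne (A t)]
      simp
    have hcount : (T : ℝ) ≤ 2 * #{t ∈ Icc 1 T | Odd t} :=
      mod_cast le_two_mul_card_filter_odd_Icc T
    rw [hsum]
    linarith

/-- Lower bound for the 2-armed bandit with composite anonymous feedback: for any
deterministic learner (equivalently, any fixed action sequence `A`, since the observed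
feedback sequence `0,1,0,1,…` is the same for both values of `Z`), the expected
pseudo-regret, averaged over the uniform random best arm `Z`, is at least `T/4`. -/
theorem two_armed_delayed_lower_bound (T : ℕ) (hT : Even T) (hT1 : 1 ≤ T)
    (A : ℕ → Fin 2) :
    -- the observed feedback (odd rounds: fully delayed, hence 0; even rounds: the delayed
    -- odd loss plus the immediate even loss) is `0,1,0,1,…`, independent of `z`
    (∀ z : Fin 2, ∀ t ∈ Finset.Icc 1 T,
        (if Odd t then (0 : ℝ)
          else twoArmLoss z A (t - 1) (A (t - 1)) + twoArmLoss z A t (A t))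
          = if Odd t then 0 else 1)
    ∧
    -- the expected pseudo-regret is at least `T/4`
    (T / 4 : ℝ) ≤ (1 / 2) * ∑ z : Fin 2,
        ((∑ t ∈ Finset.Icc 1 T, twoArmLoss z A t (A t))
          - min (∑ t ∈ Finset.Icc 1 T, twoArmLoss z A t 0)
                (∑ t ∈ Finset.Icc 1 T, twoArmLoss z A t 1)) :=
  two_armed_delayed_lower_bound_general T A
end

section
/- Let T, τ, d, m be positive integers with τ > max(d, m) and τ dividing T, and suppose a black-box bandit algorithm guarantees expected pseudo-regret at most R(J) over J rounds against any non-oblivious adversary with losses in [0,1]. Then the mini-batch wrapper with batch size τ, run against any m-bounded-memory loss sequence with non-oblivious composite anonymous d-delayed feedback, achieves expected policy regret at most τ·R(T/τ) + (2d + m − 2)·(T/τ) + d − 1. -/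
/-!
Fix an outcome and a comparator `y`. The losses of the played history exceed its delayed
observations only by the components still in flight at the horizon (at most `d - 1`), and the
observations collected during one batch of `τ` rounds total at most `τ + d - 1`, so clipping
the batch average at `1` costs at most `d - 1` per batch. The black box's counterfactual
history switches to `y` when batch `j` starts; once `m` rounds have passed, bounded memory
makes its losses those of the constant history `y`, so its batch feedback exceeds the
comparator's batch loss by at most `m + d - 1` (the first `m` rounds and the components
leaking in from earlier rounds). Summing over the `T / τ` batches bounds the policy regret
pointwise by `τ` times the black box's regret plus `(2d + m - 2) T / τ + d - 1`; integrate.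
-/

open MeasureTheory Finset

theorem Finset.sum_comp_le_sum_of_injOn {ι κ : Type*} {s : Finset ι} {t : Finset κ}
    (i : ι → κ) (hi : Set.InjOn i s) (hst : Set.MapsTo i s t) {f : κ → ℝ}
    (hf : ∀ y ∈ t, 0 ≤ f y) : ∑ x ∈ s, f (i x) ≤ ∑ y ∈ t, f y := by
  classical
  rw [← sum_image hi]
  exact sum_le_sum_of_subset_of_nonneg (image_subset_iff.2 hst) fun y hy _ => hf y hy

theorem Finset.sum_Ioc_comp_tsub_le {g : ℕ → ℝ} (hg0 : g 0 = 0) (hg : ∀ r, 0 ≤ g r)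
    (a b s : ℕ) : ∑ t ∈ Ioc a b, g (t - s) ≤ ∑ r ∈ Ioc (a - s) b, g r := by
  rw [← sum_filter_of_ne (p := fun t => s < t) fun t _ hne => by
    by_contra! hts
    exact hne (by rw [Nat.sub_eq_zero_of_le hts, hg0])]
  refine sum_comp_le_sum_of_injOn _ (fun t ht t' ht' h => ?_) (fun t ht => ?_) fun r _ => hg r
  · simp only [coe_filter, mem_Ioc, Set.mem_ofPred_eq] at ht ht' h
    omega
  · simp only [coe_filter, mem_Ioc, Set.mem_ofPred_eq, coe_Ioc, Set.mem_Ioc] at ht ⊢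
    omega

theorem Finset.sum_Ioc_le_sum_comp_tsub_add {g : ℕ → ℝ} (hg : ∀ r, 0 ≤ g r) (a b s : ℕ) :
    ∑ r ∈ Ioc a b, g r ≤ ∑ t ∈ Ioc a b, g (t - s) + ∑ r ∈ Ioc (b - s) b, g r := by
  rw [← sum_filter_add_sum_filter_not (Ioc a b) fun r => r + s ≤ b]
  gcongr ?_ + ?_
  · calc ∑ r ∈ Ioc a b with r + s ≤ b, g r
        = ∑ r ∈ Ioc a b with r + s ≤ b, g (r + s - s) := by simp only [Nat.add_sub_cancel]
      _ ≤ ∑ t ∈ Ioc a b, g (t - s) := by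
        refine sum_comp_le_sum_of_injOn (f := fun t => g (t - s)) (fun r => r + s)
          (fun r _ r' _ h => add_right_cancel h) (fun r hr => ?_) fun t _ => hg _
        simp only [coe_filter, mem_Ioc, Set.mem_ofPred_eq, coe_Ioc, Set.mem_Ioc] at hr ⊢
        omega
  · refine sum_le_sum_of_subset_of_nonneg (fun r hr => ?_) fun r _ _ => hg r
    simp only [mem_filter, mem_Ioc] at hr ⊢
    omega

theorem Finset.sum_Ioc_delayed_le {f : ℕ → ℕ → ℝ} (hf0 : ∀ s, f 0 s = 0)
    (hf : ∀ r s, 0 ≤ f r s) (d a b : ℕ) :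
    ∑ t ∈ Ioc a b, ∑ s ∈ range d, f (t - s) s ≤ ∑ r ∈ Ioc (a + 1 - d) b, ∑ s ∈ range d, f r s := by
  rw [sum_comm, sum_comm (s := Ioc _ _)]
  refine sum_le_sum fun s hs => (sum_Ioc_comp_tsub_le (hf0 s) (hf · s) a b s).trans ?_
  exact sum_le_sum_of_subset_of_nonneg
    (Ioc_subset_Ioc_left (by simp only [mem_range] at hs; omega : a + 1 - d ≤ a - s))
    fun r _ _ => hf r s

theorem Finset.sum_Ioc_le_delayed_add {f : ℕ → ℕ → ℝ} (hf : ∀ r s, 0 ≤ f r s) (d a b : ℕ) :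
    ∑ r ∈ Ioc a b, ∑ s ∈ range d, f r s
      ≤ ∑ t ∈ Ioc a b, ∑ s ∈ range d, f (t - s) s
        + ∑ r ∈ Ioc (b + 1 - d) b, ∑ s ∈ range d, f r s := by
  rw [sum_comm, sum_comm (s := Ioc a b) (t := range d), sum_comm (s := Ioc (b + 1 - d) b),
    ← sum_add_distrib]
  refine sum_le_sum fun s hs => (sum_Ioc_le_sum_comp_tsub_add (hf · s) a b s).trans ?_
  exact add_le_add le_rfl (sum_le_sum_of_subset_of_nonneg
    (Ioc_subset_Ioc_left (by simp only [mem_range] at hs; omega : b + 1 - d ≤ b - s))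
    fun r _ _ => hf r s)

theorem Finset.sum_Ioc_le_of_le_one {f : ℕ → ℝ} (hf : ∀ r, f r ≤ 1) {a b k : ℕ}
    (hk : b ≤ a + k) : ∑ r ∈ Ioc a b, f r ≤ k := by
  calc ∑ r ∈ Ioc a b, f r ≤ #(Ioc a b) • (1 : ℝ) := sum_le_card_nsmul _ _ 1 fun r _ => hf r
    _ ≤ k := by rw [Nat.card_Ioc, nsmul_one]; exact_mod_cast (by omega : b - a ≤ k)

theorem Finset.sum_Icc_batches (F : ℕ → ℝ) (τ J : ℕ) :
    ∑ j ∈ Icc 1 J, ∑ t ∈ Ioc ((j - 1) * τ) (j * τ), F t = ∑ t ∈ Ioc 0 (J * τ), F t := by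
  induction J with
  | zero => simp
  | succ J ih =>
    rw [sum_Icc_succ_top (by omega), ih, Nat.add_sub_cancel]
    exact sum_Ioc_consecutive F (Nat.zero_le _) (Nat.mul_le_mul_right τ J.le_succ)

theorem Nat.sub_one_mul_add_self {j : ℕ} (hj : 1 ≤ j) (τ : ℕ) : (j - 1) * τ + τ = j * τ := by
  rw [← Nat.succ_mul, Nat.succ_eq_add_one, Nat.sub_add_cancel hj]

theorem le_mul_min_inv_mul_one_add {τ x c : ℝ} (hτ : 0 < τ) (hc : 0 ≤ c) (hx : x ≤ τ + c) :
    x ≤ τ * min (1 / τ * x) 1 + c := by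
  rcases le_total (1 / τ * x) 1 with h | h
  · rw [min_eq_left h, ← mul_assoc, mul_one_div_cancel hτ.ne', one_mul]
    linarith
  · rw [min_eq_right h]
    linarith

theorem mul_min_inv_mul_one_le {τ : ℝ} (hτ : 0 < τ) (x : ℝ) : τ * min (1 / τ * x) 1 ≤ x :=
  calc τ * min (1 / τ * x) 1 ≤ τ * (1 / τ * x) := by gcongr; exact min_le_left _ _
    _ = x := by rw [← mul_assoc, mul_one_div_cancel hτ.ne', one_mul]

theorem Finset.sup'_le_mul_sup'_add {ι : Type*} {s : Finset ι} (hs : s.Nonempty)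
    {F G : ι → ℝ} {c C : ℝ} (hc : 0 ≤ c) (h : ∀ y ∈ s, F y ≤ c * G y + C) :
    s.sup' hs F ≤ c * s.sup' hs G + C :=
  sup'_le hs F fun y hy => (h y hy).trans (by gcongr; exact le_sup' G hy)

theorem MeasureTheory.integral_le_mul_add_of_le {Ω : Type*} [MeasurableSpace Ω] {μ : Measure Ω}
    [IsProbabilityMeasure μ] {f g : Ω → ℝ} (hf : Integrable f μ) (hg : Integrable g μ)
    {c C R : ℝ} (hc : 0 ≤ c) (hfg : ∀ ω, f ω ≤ c * g ω + C) (hR : ∫ ω, g ω ∂μ ≤ R) :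
    ∫ ω, f ω ∂μ ≤ c * R + C :=
  calc ∫ ω, f ω ∂μ ≤ ∫ ω, (c * g ω + C) ∂μ :=
        integral_mono hf ((hg.const_mul c).add (integrable_const C)) hfg
    _ = c * ∫ ω, g ω ∂μ + C := by
        rw [integral_add (hg.const_mul c) (integrable_const C), integral_const_mul,
          integral_const, probReal_univ, one_smul]
    _ ≤ c * R + C := by gcongr

section DelayedFeedback

variable {𝒜 : Type*} {d : ℕ} {l : ℕ → (ℕ → 𝒜) → ℝ} {lc : ℕ → ℕ → (ℕ → 𝒜) → ℝ}

theorem sum_Ioc_observed_le_sum_loss (hlc_nonneg : ∀ t s h, 0 ≤ lc t s h)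
    (hlc_sum : ∀ t h, 1 ≤ t → ∑ s ∈ range d, lc t s h = l t h)
    (hlc_zero : ∀ s h, lc 0 s h = 0) (h : ℕ → 𝒜) (a b : ℕ) :
    ∑ t ∈ Ioc a b, ∑ s ∈ range d, lc (t - s) s h ≤ ∑ r ∈ Ioc (a + 1 - d) b, l r h :=
  (sum_Ioc_delayed_le (f := fun r s => lc r s h) (hlc_zero · h) (hlc_nonneg · · h) d a b).trans_eq
    (sum_congr rfl fun r hr => hlc_sum r h (by simp only [mem_Ioc] at hr; omega))

theorem sum_Ioc_loss_le_observed_add (hl_le : ∀ t h, l t h ≤ 1)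
    (hlc_nonneg : ∀ t s h, 0 ≤ lc t s h)
    (hlc_sum : ∀ t h, 1 ≤ t → ∑ s ∈ range d, lc t s h = l t h) (h : ℕ → 𝒜) (N : ℕ) :
    ∑ t ∈ Ioc 0 N, l t h ≤ ∑ t ∈ Ioc 0 N, ∑ s ∈ range d, lc (t - s) s h + (d - 1 : ℕ) := by
  have hsplit : ∀ a, ∑ r ∈ Ioc a N, l r h = ∑ r ∈ Ioc a N, ∑ s ∈ range d, lc r s h :=
    fun a => sum_congr rfl fun r hr => (hlc_sum r h (by simp only [mem_Ioc] at hr; omega)).symm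
  calc ∑ t ∈ Ioc 0 N, l t h
      ≤ ∑ t ∈ Ioc 0 N, ∑ s ∈ range d, lc (t - s) s h + ∑ r ∈ Ioc (N + 1 - d) N, l r h := by
        rw [hsplit, hsplit]
        exact sum_Ioc_le_delayed_add (f := fun r s => lc r s h) (hlc_nonneg · · h) d 0 N
    _ ≤ _ := by gcongr; exact sum_Ioc_le_of_le_one (hl_le · h) (by omega)

variable {τ : ℕ}

theorem observed_batch_le_clip_add (hτ : 0 < τ) (hl_le : ∀ t h, l t h ≤ 1)
    (hlc_nonneg : ∀ t s h, 0 ≤ lc t s h)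
    (hlc_sum : ∀ t h, 1 ≤ t → ∑ s ∈ range d, lc t s h = l t h)
    (hlc_zero : ∀ s h, lc 0 s h = 0) (h : ℕ → 𝒜) {a b : ℕ} (hab : b ≤ a + τ) :
    ∑ t ∈ Ioc a b, ∑ s ∈ range d, lc (t - s) s h
      ≤ τ * min (1 / τ * ∑ t ∈ Ioc a b, ∑ s ∈ range d, lc (t - s) s h) 1 + (d - 1 : ℕ) := by
  refine le_mul_min_inv_mul_one_add (by exact_mod_cast hτ) (Nat.cast_nonneg _) ?_
  calc ∑ t ∈ Ioc a b, ∑ s ∈ range d, lc (t - s) s h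
      ≤ ∑ r ∈ Ioc (a + 1 - d) b, l r h :=
        sum_Ioc_observed_le_sum_loss hlc_nonneg hlc_sum hlc_zero h a b
    _ ≤ (τ + (d - 1) : ℕ) := sum_Ioc_le_of_le_one (hl_le · h) (by omega)
    _ = τ + (d - 1 : ℕ) := Nat.cast_add _ _

theorem clip_counterfactual_batch_le {m : ℕ} (hτ : 0 < τ) (hd : 1 ≤ d)
    (hl01 : ∀ t h, 0 ≤ l t h ∧ l t h ≤ 1)
    (hmem : ∀ t (h h' : ℕ → 𝒜), (∀ s, t - m ≤ s → h s = h' s) → l t h = l t h')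
    (hlc_nonneg : ∀ t s h, 0 ≤ lc t s h)
    (hlc_sum : ∀ t h, 1 ≤ t → ∑ s ∈ range d, lc t s h = l t h)
    (hlc_zero : ∀ s h, lc 0 s h = 0) {a b : ℕ} (hab : a + m ≤ b) {g : ℕ → 𝒜} {y : 𝒜}
    (hg : ∀ u, a < u → g u = y) :
    τ * min (1 / τ * ∑ t ∈ Ioc a b, ∑ s ∈ range d, lc (t - s) s g) 1
      ≤ ∑ r ∈ Ioc a b, l r (fun _ => y) + (m + d - 1 : ℕ) := by
  have hforget : ∑ r ∈ Ioc (a + m) b, l r g = ∑ r ∈ Ioc (a + m) b, l r (fun _ => y) :=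
    sum_congr rfl fun r hr => hmem r g _ fun s hs => hg s (by simp only [mem_Ioc] at hr; omega)
  calc τ * min (1 / τ * ∑ t ∈ Ioc a b, ∑ s ∈ range d, lc (t - s) s g) 1
      ≤ ∑ t ∈ Ioc a b, ∑ s ∈ range d, lc (t - s) s g :=
        mul_min_inv_mul_one_le (by exact_mod_cast hτ) _
    _ ≤ ∑ r ∈ Ioc (a + 1 - d) b, l r g :=
        sum_Ioc_observed_le_sum_loss hlc_nonneg hlc_sum hlc_zero g a b
    _ = ∑ r ∈ Ioc (a + 1 - d) (a + m), l r g + ∑ r ∈ Ioc (a + m) b, l r (fun _ => y) := by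
        rw [← hforget, sum_Ioc_consecutive _ (by omega) hab]
    _ ≤ (m + d - 1 : ℕ) + ∑ r ∈ Ioc a b, l r (fun _ => y) :=
        add_le_add (sum_Ioc_le_of_le_one (fun r => (hl01 r g).2) (by omega))
          (sum_le_sum_of_subset_of_nonneg (Ioc_subset_Ioc_left (Nat.le_add_right a m))
            fun r _ _ => (hl01 r _).1)
    _ = _ := add_comm _ _

theorem sum_Ioc_loss_le_clip_batches_add (hτ : 0 < τ) (hl_le : ∀ t h, l t h ≤ 1)
    (hlc_nonneg : ∀ t s h, 0 ≤ lc t s h)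
    (hlc_sum : ∀ t h, 1 ≤ t → ∑ s ∈ range d, lc t s h = l t h)
    (hlc_zero : ∀ s h, lc 0 s h = 0) (h : ℕ → 𝒜) (J : ℕ) :
    ∑ t ∈ Ioc 0 (J * τ), l t h
      ≤ τ * ∑ j ∈ Icc 1 J,
          min (1 / τ * ∑ t ∈ Ioc ((j - 1) * τ) (j * τ), ∑ s ∈ range d, lc (t - s) s h) 1
        + (d - 1 : ℕ) * J + (d - 1 : ℕ) :=
  calc ∑ t ∈ Ioc 0 (J * τ), l t h
      ≤ ∑ j ∈ Icc 1 J, ∑ t ∈ Ioc ((j - 1) * τ) (j * τ), ∑ s ∈ range d, lc (t - s) s h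
        + (d - 1 : ℕ) := by
        rw [sum_Icc_batches]
        exact sum_Ioc_loss_le_observed_add hl_le hlc_nonneg hlc_sum h _
    _ ≤ ∑ j ∈ Icc 1 J, (τ * min (1 / τ * ∑ t ∈ Ioc ((j - 1) * τ) (j * τ),
          ∑ s ∈ range d, lc (t - s) s h) 1 + (d - 1 : ℕ)) + (d - 1 : ℕ) := by
        gcongr with j hj
        exact observed_batch_le_clip_add hτ hl_le hlc_nonneg hlc_sum hlc_zero h
          (Nat.sub_one_mul_add_self (mem_Icc.1 hj).1 τ).ge
    _ = _ := by
        rw [sum_add_distrib, ← mul_sum, sum_const, Nat.card_Icc, Nat.add_sub_cancel, nsmul_eq_mul]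
        ring

theorem clip_counterfactual_batches_le {m : ℕ} (hτ : 0 < τ) (hd : 1 ≤ d) (hmτ : m ≤ τ)
    (hl01 : ∀ t h, 0 ≤ l t h ∧ l t h ≤ 1)
    (hmem : ∀ t (h h' : ℕ → 𝒜), (∀ s, t - m ≤ s → h s = h' s) → l t h = l t h')
    (hlc_nonneg : ∀ t s h, 0 ≤ lc t s h)
    (hlc_sum : ∀ t h, 1 ≤ t → ∑ s ∈ range d, lc t s h = l t h)
    (hlc_zero : ∀ s h, lc 0 s h = 0) (J : ℕ) {y : 𝒜} {g : ℕ → ℕ → 𝒜}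
    (hg : ∀ j u, (j - 1) * τ < u → g j u = y) :
    τ * ∑ j ∈ Icc 1 J,
        min (1 / τ * ∑ t ∈ Ioc ((j - 1) * τ) (j * τ), ∑ s ∈ range d, lc (t - s) s (g j)) 1
      ≤ ∑ t ∈ Ioc 0 (J * τ), l t (fun _ => y) + (m + d - 1 : ℕ) * J :=
  calc _ = ∑ j ∈ Icc 1 J, τ * min (1 / τ * ∑ t ∈ Ioc ((j - 1) * τ) (j * τ),
          ∑ s ∈ range d, lc (t - s) s (g j)) 1 := mul_sum _ _ _
    _ ≤ ∑ j ∈ Icc 1 J, (∑ t ∈ Ioc ((j - 1) * τ) (j * τ), l t (fun _ => y) + (m + d - 1 : ℕ)) :=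
        sum_le_sum fun j hj => clip_counterfactual_batch_le hτ hd hl01 hmem hlc_nonneg hlc_sum
          hlc_zero (by rw [← Nat.sub_one_mul_add_self (mem_Icc.1 hj).1 τ]; omega) (hg j)
    _ = _ := by
        rw [sum_add_distrib, sum_Icc_batches, sum_const, Nat.card_Icc, Nat.add_sub_cancel,
          nsmul_eq_mul]
        ring

end DelayedFeedback

theorem regret_le_mul_batch_regret_add {𝒜 : Type*} {τ d m : ℕ} {l : ℕ → (ℕ → 𝒜) → ℝ}
    {lc : ℕ → ℕ → (ℕ → 𝒜) → ℝ} (hτ : 0 < τ) (hd : 1 ≤ d) (hmτ : m ≤ τ)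
    (hl01 : ∀ t h, 0 ≤ l t h ∧ l t h ≤ 1)
    (hmem : ∀ t (h h' : ℕ → 𝒜), (∀ s, t - m ≤ s → h s = h' s) → l t h = l t h')
    (hlc_nonneg : ∀ t s h, 0 ≤ lc t s h)
    (hlc_sum : ∀ t h, 1 ≤ t → ∑ s ∈ range d, lc t s h = l t h)
    (hlc_zero : ∀ s h, lc 0 s h = 0) (J : ℕ) (h : ℕ → 𝒜) {y : 𝒜} {g : ℕ → ℕ → 𝒜}
    (hg : ∀ j u, (j - 1) * τ < u → g j u = y) :
    ∑ t ∈ Icc 1 (J * τ), l t h - ∑ t ∈ Icc 1 (J * τ), l t (fun _ => y)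
      ≤ τ * ∑ j ∈ Icc 1 J,
          (min (1 / τ * ∑ t ∈ Icc ((j - 1) * τ + 1) (j * τ), ∑ s ∈ range d, lc (t - s) s h) 1
          - min (1 / τ * ∑ t ∈ Icc ((j - 1) * τ + 1) (j * τ),
              ∑ s ∈ range d, lc (t - s) s (g j)) 1)
        + ((2 * d + m : ℕ) - 2 : ℝ) * J + ((d : ℝ) - 1) := by
  have hIcc : Icc 1 (J * τ) = Ioc 0 (J * τ) := Icc_add_one_left_eq_Ioc 0 _
  simp only [Icc_add_one_left_eq_Ioc, hIcc]
  have hplayed := sum_Ioc_loss_le_clip_batches_add hτ (fun t h => (hl01 t h).2) hlc_nonneg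
    hlc_sum hlc_zero h J
  have hcomparator := clip_counterfactual_batches_le hτ hd hmτ hl01 hmem hlc_nonneg hlc_sum
    hlc_zero J hg
  have hconst : ((2 * d + m : ℕ) - 2 : ℝ) = (d - 1 : ℕ) + (m + d - 1 : ℕ) := by
    rw [show 2 * d + m = (d - 1 + (m + d - 1)) + 2 by omega]
    push_cast
    ring
  rw [hconst, ← Nat.cast_pred hd, sum_sub_distrib, mul_sub]
  linarith

theorem minibatch_wrapper_policy_regret_general
    {𝒜 : Type*} [Fintype 𝒜] [Nonempty 𝒜]
    {Ω : Type*} [MeasurableSpace Ω] (μ : Measure Ω) [IsProbabilityMeasure μ]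
    (T τ d m : ℕ) (hd : 1 ≤ d) (hτ : max d m < τ) (hdvd : τ ∣ T)
    (l : ℕ → (ℕ → 𝒜) → ℝ)
    (hl01 : ∀ t h, 0 ≤ l t h ∧ l t h ≤ 1)
    (hmem : ∀ t (h h' : ℕ → 𝒜), (∀ s, t - m ≤ s → h s = h' s) → l t h = l t h')
    (lc : ℕ → ℕ → (ℕ → 𝒜) → ℝ)
    (hlc_nonneg : ∀ t s h, 0 ≤ lc t s h)
    (hlc_sum : ∀ t h, 1 ≤ t → ∑ s ∈ Finset.range d, lc t s h = l t h)
    (hlc_zero : ∀ s h, lc 0 s h = 0)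
    (A : ℕ → Ω → 𝒜)
    (R : ℕ → ℝ)
    -- the black box's expected pseudo-regret bound, applied to the clipped batch
    -- feedback `hatl j` and its counterfactual value had `y` been played in batch `j`
    (hBB : ∫ ω, Finset.univ.sup' Finset.univ_nonempty (fun y : 𝒜 =>
        ∑ j ∈ Finset.Icc 1 (T / τ),
          (min ((1 / (τ : ℝ)) * ∑ t ∈ Finset.Icc ((j - 1) * τ + 1) (j * τ),
              ∑ s ∈ Finset.range d, lc (t - s) s (fun u => A u ω)) 1
          - min ((1 / (τ : ℝ)) * ∑ t ∈ Finset.Icc ((j - 1) * τ + 1) (j * τ),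
              ∑ s ∈ Finset.range d,
                lc (t - s) s (fun u => if u ≤ (j - 1) * τ then A u ω else y)) 1)) ∂μ
        ≤ R (T / τ))
    (hint₁ : Integrable (fun ω => Finset.univ.sup' Finset.univ_nonempty (fun y : 𝒜 =>
        ∑ j ∈ Finset.Icc 1 (T / τ),
          (min ((1 / (τ : ℝ)) * ∑ t ∈ Finset.Icc ((j - 1) * τ + 1) (j * τ),
              ∑ s ∈ Finset.range d, lc (t - s) s (fun u => A u ω)) 1
          - min ((1 / (τ : ℝ)) * ∑ t ∈ Finset.Icc ((j - 1) * τ + 1) (j * τ),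
              ∑ s ∈ Finset.range d,
                lc (t - s) s (fun u => if u ≤ (j - 1) * τ then A u ω else y)) 1))) μ)
    (hint₂ : Integrable (fun ω => Finset.univ.sup' Finset.univ_nonempty (fun y : 𝒜 =>
        (∑ t ∈ Finset.Icc 1 T, l t (fun u => A u ω))
          - ∑ t ∈ Finset.Icc 1 T, l t (fun _ => y))) μ) :
    -- expected policy regret bound
    ∫ ω, Finset.univ.sup' Finset.univ_nonempty (fun y : 𝒜 =>
        (∑ t ∈ Finset.Icc 1 T, l t (fun u => A u ω))
          - ∑ t ∈ Finset.Icc 1 T, l t (fun _ => y)) ∂μ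
      ≤ τ * R (T / τ) + ((2 * d + m : ℕ) - 2 : ℝ) * ((T / τ : ℕ) : ℝ) + ((d : ℝ) - 1) := by
  have hτ0 : 0 < τ := by omega
  obtain ⟨J, rfl⟩ := hdvd
  rw [Nat.mul_div_cancel_left J hτ0] at hBB hint₁ ⊢
  rw [mul_comm τ J] at hint₂ ⊢
  rw [add_assoc]
  refine integral_le_mul_add_of_le hint₂ hint₁ (Nat.cast_nonneg τ) (fun ω => ?_) hBB
  refine sup'_le_mul_sup'_add _ (Nat.cast_nonneg τ) fun y _ => ?_
  refine (regret_le_mul_batch_regret_add hτ0 hd (by omega) hl01 hmem hlc_nonneg hlc_sum hlc_zero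
    J (fun u => A u ω) fun j u hu => if_neg (by omega)).trans_eq (add_assoc _ _ _)

/-- The mini-batch wrapper converts a black-box bandit algorithm with expected
pseudo-regret bound `R(J)` into an algorithm for the composite anonymous `d`-delayed,
`m`-bounded-memory non-oblivious setting, with expected policy regret at most
`τ·R(T/τ) + (2d + m − 2)·(T/τ) + d − 1`.

Here `l t h` is the (non-oblivious) loss at round `t` given the action history `h`,
split into delayed components `lc t s h` (`s < d`); `A t ω` is the action actually played
at round `t`, constant on each batch and equal to the black box's choice `Z j ω`; the
observed feedback at round `t` is `∑_{s<d} lc (t−s) s` evaluated on the realized history,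
and the black box receives the clipped batch averages. -/
theorem minibatch_wrapper_policy_regret
    {𝒜 : Type*} [Fintype 𝒜] [Nonempty 𝒜]
    {Ω : Type*} [MeasurableSpace Ω] (μ : Measure Ω) [IsProbabilityMeasure μ]
    (T τ d m : ℕ) (hd : 1 ≤ d) (hm : 1 ≤ m) (hτ : max d m < τ) (hdvd : τ ∣ T)
    (hT : 1 ≤ T)
    (l : ℕ → (ℕ → 𝒜) → ℝ)
    (hl01 : ∀ t h, 0 ≤ l t h ∧ l t h ≤ 1)
    (hmem : ∀ t (h h' : ℕ → 𝒜), (∀ s, t - m ≤ s → h s = h' s) → l t h = l t h')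
    (lc : ℕ → ℕ → (ℕ → 𝒜) → ℝ)
    (hlc_nonneg : ∀ t s h, 0 ≤ lc t s h)
    (hlc_sum : ∀ t h, 1 ≤ t → ∑ s ∈ Finset.range d, lc t s h = l t h)
    (hlc_zero : ∀ s h, lc 0 s h = 0)
    (A : ℕ → Ω → 𝒜) (Z : ℕ → Ω → 𝒜)
    (hbatch : ∀ j, 1 ≤ j → ∀ t, (j - 1) * τ + 1 ≤ t → t ≤ j * τ → ∀ ω, A t ω = Z j ω)
    (R : ℕ → ℝ)
    -- the black box's expected pseudo-regret bound, applied to the clipped batch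
    -- feedback `hatl j` and its counterfactual value had `y` been played in batch `j`
    (hBB : ∫ ω, Finset.univ.sup' Finset.univ_nonempty (fun y : 𝒜 =>
        ∑ j ∈ Finset.Icc 1 (T / τ),
          (min ((1 / (τ : ℝ)) * ∑ t ∈ Finset.Icc ((j - 1) * τ + 1) (j * τ),
              ∑ s ∈ Finset.range d, lc (t - s) s (fun u => A u ω)) 1
          - min ((1 / (τ : ℝ)) * ∑ t ∈ Finset.Icc ((j - 1) * τ + 1) (j * τ),
              ∑ s ∈ Finset.range d,
                lc (t - s) s (fun u => if u ≤ (j - 1) * τ then A u ω else y)) 1)) ∂μ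
        ≤ R (T / τ))
    (hint₁ : Integrable (fun ω => Finset.univ.sup' Finset.univ_nonempty (fun y : 𝒜 =>
        ∑ j ∈ Finset.Icc 1 (T / τ),
          (min ((1 / (τ : ℝ)) * ∑ t ∈ Finset.Icc ((j - 1) * τ + 1) (j * τ),
              ∑ s ∈ Finset.range d, lc (t - s) s (fun u => A u ω)) 1
          - min ((1 / (τ : ℝ)) * ∑ t ∈ Finset.Icc ((j - 1) * τ + 1) (j * τ),
              ∑ s ∈ Finset.range d,
                lc (t - s) s (fun u => if u ≤ (j - 1) * τ then A u ω else y)) 1))) μ)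
    (hint₂ : Integrable (fun ω => Finset.univ.sup' Finset.univ_nonempty (fun y : 𝒜 =>
        (∑ t ∈ Finset.Icc 1 T, l t (fun u => A u ω))
          - ∑ t ∈ Finset.Icc 1 T, l t (fun _ => y))) μ) :
    -- expected policy regret bound
    ∫ ω, Finset.univ.sup' Finset.univ_nonempty (fun y : 𝒜 =>
        (∑ t ∈ Finset.Icc 1 T, l t (fun u => A u ω))
          - ∑ t ∈ Finset.Icc 1 T, l t (fun _ => y)) ∂μ
      ≤ τ * R (T / τ) + ((2 * d + m : ℕ) - 2 : ℝ) * ((T / τ : ℕ) : ℝ) + ((d : ℝ) - 1) :=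
  minibatch_wrapper_policy_regret_general μ T τ d m hd hτ hdvd l hl01 hmem lc hlc_nonneg hlc_sum
    hlc_zero A R hBB hint₁ hint₂
end

section
/- Let ℙ⁰ and ℙⁱ be the laws of the observed-loss sequence for a fixed deterministic learner under hypotheses Z=0 and Z=i respectively in the lower-bound construction, and suppose the per-round conditional KL divergence satisfies D_KL(ℙ⁰_t ‖ ℙⁱ_t) ≤ (ε²/2σ²)·𝟙[S_t^i ≠ S_{ρ*(t)}^i] where the total number of state switches ∑_t 𝟙[S_{t−1}^i ≠ S_t^i] is at most 8ε·T_i/(1−8ε), and ρ* has width ω(ρ*). Then D_TV(ℙ⁰, ℙⁱ) ≤ (ε/σ)·√(2·ω(ρ*)·ε·𝔼_{ℙ⁰}[T_i]/(1−8ε)). -/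
/-!
If `S` differs between rounds `ρ t < t` and `t`, it switches at some round `s ∈ (ρ t, t]`. Summing
over `t` and exchanging the sums, a switch at `s` is charged once for every `t` with
`ρ t < s ≤ t`, that is at most `ω` times. Hence the per-round KL bounds add up to at most
`ε²/(2σ²) · ω · #switches ≤ ε²/(2σ²) · ω · 8εTᵢ/(1 − 8ε)`; integrating and applying Pinsker's
inequality gives the total variation bound.
-/

open MeasureTheory Finset

theorem exists_ne_pred_of_ne {α : Type*} {f : ℕ → α} {a b : ℕ} (hab : a ≤ b) (h : f b ≠ f a) :
    ∃ s ∈ Ioc a b, f (s - 1) ≠ f s := by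
  induction b, hab using Nat.le_induction with
  | base => exact absurd rfl h
  | succ b hab ih =>
    by_cases hswitch : f b = f (b + 1)
    · obtain ⟨s, hs, hfs⟩ := ih (hswitch ▸ h)
      exact ⟨s, Ioc_subset_Ioc_right b.le_succ hs, hfs⟩
    · exact ⟨b + 1, mem_Ioc.2 ⟨Nat.lt_succ_of_le hab, le_rfl⟩, hswitch⟩

theorem ite_ne_le_sum_switches {α : Type*} [DecidableEq α] (f : ℕ → α) {a b : ℕ} (hab : a ≤ b) :
    (if f b ≠ f a then (1 : ℝ) else 0) ≤
      ∑ s ∈ Ioc a b, if f (s - 1) ≠ f s then 1 else 0 := by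
  have hnonneg : ∀ s ∈ Ioc a b, (0 : ℝ) ≤ if f (s - 1) ≠ f s then 1 else 0 :=
    fun _ _ ↦ by split_ifs <;> norm_num
  split_ifs with h
  · obtain ⟨s, hs, hfs⟩ := exists_ne_pred_of_ne hab h
    simpa [hfs] using single_le_sum hnonneg hs
  · exact sum_nonneg hnonneg

theorem sum_sum_Ioc_parent_le_mul_sum {ρ : ℕ → ℕ} {T : ℕ} {ω : ℝ}
    (hwidth : ∀ t ∈ Icc 0 T, (#{s ∈ Icc 1 T | ρ s ≤ t ∧ t < s} : ℝ) ≤ ω)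
    {g : ℕ → ℝ} (hg : ∀ s, 0 ≤ g s) :
    ∑ t ∈ Icc 1 T, ∑ s ∈ Ioc (ρ t) t, g s ≤ ω * ∑ s ∈ Icc 1 T, g s := by
  rw [sum_comm' (t' := Icc 1 T) (s' := fun s ↦ {t ∈ Icc 1 T | ρ t < s ∧ s ≤ t})
    (fun t s ↦ by simp only [mem_Icc, mem_Ioc, mem_filter]; omega), mul_sum]
  refine sum_le_sum fun s hs ↦ ?_
  rw [sum_const, nsmul_eq_mul]
  refine mul_le_mul_of_nonneg_right ?_ (hg s)
  have hcount : {t ∈ Icc 1 T | ρ t < s ∧ s ≤ t} = {t ∈ Icc 1 T | ρ t ≤ s - 1 ∧ s - 1 < t} := by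
    simp only [mem_Icc] at hs
    exact filter_congr fun t _ ↦ by omega
  rw [hcount]
  exact hwidth (s - 1) (by simp only [mem_Icc] at hs ⊢; omega)

theorem sum_ite_ne_parent_le_mul_switches {α : Type*} [DecidableEq α] {ρ : ℕ → ℕ} {T : ℕ} {ω : ℝ}
    (hρ : ∀ t ∈ Icc 1 T, ρ t < t)
    (hwidth : ∀ t ∈ Icc 0 T, (#{s ∈ Icc 1 T | ρ s ≤ t ∧ t < s} : ℝ) ≤ ω) (f : ℕ → α) :
    ∑ t ∈ Icc 1 T, (if f t ≠ f (ρ t) then (1 : ℝ) else 0) ≤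
      ω * ∑ s ∈ Icc 1 T, if f (s - 1) ≠ f s then 1 else 0 :=
  calc ∑ t ∈ Icc 1 T, (if f t ≠ f (ρ t) then (1 : ℝ) else 0)
      ≤ ∑ t ∈ Icc 1 T, ∑ s ∈ Ioc (ρ t) t, if f (s - 1) ≠ f s then 1 else 0 :=
        sum_le_sum fun t ht ↦ ite_ne_le_sum_switches f (hρ t ht).le
    _ ≤ ω * ∑ s ∈ Icc 1 T, if f (s - 1) ≠ f s then 1 else 0 :=
        sum_sum_Ioc_parent_le_mul_sum hwidth fun _ ↦ by split_ifs <;> norm_num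

/-- `μ` is the law of everything under `Z = 0`, `Dt t x` the conditional KL divergence at round `t`
given the observation history, `S t x` the state of the delay adversary under `Z = i`, and `Ti x`
the number of plays of arm `i`. -/
theorem kl_chain_tv_bound_general {Ω : Type*} [MeasurableSpace Ω] (μ : Measure Ω)
    (T : ℕ) (ε σ ω : ℝ) (hε0 : 0 < ε) (hε : ε < 1 / 8)
    (hσ : 0 < σ) (hω : 0 ≤ ω)
    (ρ : ℕ → ℕ) (hρ : ∀ t ∈ Finset.Icc 1 T, ρ t < t)
    (hwidth : ∀ t ∈ Finset.Icc 0 T,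
      (((Finset.Icc 1 T).filter (fun s => ρ s ≤ t ∧ t < s)).card : ℝ) ≤ ω)
    (S : ℕ → Ω → Bool) (Ti : Ω → ℝ)
    (hTi_int : Integrable Ti μ)
    (Dt : ℕ → Ω → ℝ) (hDt_int : ∀ t, Integrable (Dt t) μ)
    (hDt : ∀ t ∈ Finset.Icc 1 T, ∀ x,
      Dt t x ≤ ε ^ 2 / (2 * σ ^ 2) * (if S t x ≠ S (ρ t) x then 1 else 0))
    (hswitch : ∀ x,
      (∑ t ∈ Finset.Icc 1 T, if S (t - 1) x ≠ S t x then (1 : ℝ) else 0)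
        ≤ 8 * ε * Ti x / (1 - 8 * ε))
    (kl tv : ℝ)
    -- chain rule for the KL divergence between the observation laws
    (hchain : kl = ∑ t ∈ Finset.Icc 1 T, ∫ x, Dt t x ∂μ)
    -- Pinsker's inequality
    (hpinsker : tv ≤ Real.sqrt (kl / 2)) :
    tv ≤ (ε / σ) * Real.sqrt (2 * ω * ε * (∫ x, Ti x ∂μ) / (1 - 8 * ε)) := by
  set c := ε ^ 2 / (2 * σ ^ 2) * ω * (8 * ε / (1 - 8 * ε))
  have hpointwise : ∀ x, ∑ t ∈ Icc 1 T, Dt t x ≤ c * Ti x := fun x ↦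
    calc ∑ t ∈ Icc 1 T, Dt t x
        ≤ ε ^ 2 / (2 * σ ^ 2) * ∑ t ∈ Icc 1 T, if S t x ≠ S (ρ t) x then (1 : ℝ) else 0 := by
          rw [mul_sum]; exact sum_le_sum fun t ht ↦ hDt t ht x
      _ ≤ ε ^ 2 / (2 * σ ^ 2) * (ω * (8 * ε * Ti x / (1 - 8 * ε))) := by
          gcongr
          exact (sum_ite_ne_parent_le_mul_switches hρ hwidth (S · x)).trans
            (mul_le_mul_of_nonneg_left (hswitch x) hω)
      _ = c * Ti x := by ring
  have hkl : kl ≤ c * ∫ x, Ti x ∂μ := by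
    rw [hchain, ← integral_finsetSum _ fun t _ ↦ hDt_int t, ← integral_const_mul]
    exact integral_mono (integrable_finsetSum _ fun t _ ↦ hDt_int t) (hTi_int.const_mul c)
      hpointwise
  have hc : c * (∫ x, Ti x ∂μ) / 2 = (ε / σ) ^ 2 * (2 * ω * ε * (∫ x, Ti x ∂μ) / (1 - 8 * ε)) := by
    have : 1 - 8 * ε ≠ 0 := by linarith
    simp only [c]
    field_simp
    ring
  calc tv ≤ Real.sqrt (kl / 2) := hpinsker
    _ ≤ Real.sqrt ((ε / σ) ^ 2 * (2 * ω * ε * (∫ x, Ti x ∂μ) / (1 - 8 * ε))) :=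
        Real.sqrt_le_sqrt (by linarith)
    _ = (ε / σ) * Real.sqrt (2 * ω * ε * (∫ x, Ti x ∂μ) / (1 - 8 * ε)) := by
        rw [Real.sqrt_mul (sq_nonneg _), Real.sqrt_sq (div_pos hε0 hσ).le]

/-- From the per-round conditional KL bound `D_KL(ℙ⁰_t‖ℙⁱ_t) ≤ (ε²/2σ²)·𝟙[S_t ≠ S_{ρ*(t)}]`,
the switch-count bound `∑_t 𝟙[S_{t−1} ≠ S_t] ≤ 8εT_i/(1−8ε)`, the width bound for the
parent function `ρ*`, the chain rule for KL, and Pinsker's inequality, conclude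
`D_TV(ℙ⁰, ℙⁱ) ≤ (ε/σ)·√(2·ω·ε·𝔼_{ℙ⁰}[T_i]/(1−8ε))`.

Here `μ` is the law of everything under `Z = 0`, `Dt t ω` is the conditional KL divergence
at round `t` given the observation history, `S t ω` the delay adversary's state under
`Z = i`, and `Ti ω` the number of plays of arm `i`. -/
theorem kl_chain_tv_bound {Ω : Type*} [MeasurableSpace Ω] (μ : Measure Ω)
    [IsProbabilityMeasure μ] (T : ℕ) (ε σ ω : ℝ) (hε0 : 0 < ε) (hε : ε < 1 / 8)
    (hσ : 0 < σ) (hω : 0 ≤ ω)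
    (ρ : ℕ → ℕ) (hρ : ∀ t ∈ Finset.Icc 1 T, ρ t < t)
    (hwidth : ∀ t ∈ Finset.Icc 0 T,
      (((Finset.Icc 1 T).filter (fun s => ρ s ≤ t ∧ t < s)).card : ℝ) ≤ ω)
    (S : ℕ → Ω → Bool) (Ti : Ω → ℝ) (hTi : ∀ x, 0 ≤ Ti x)
    (hTi_int : Integrable Ti μ)
    (Dt : ℕ → Ω → ℝ) (hDt_int : ∀ t, Integrable (Dt t) μ)
    (hDt : ∀ t ∈ Finset.Icc 1 T, ∀ x,
      Dt t x ≤ ε ^ 2 / (2 * σ ^ 2) * (if S t x ≠ S (ρ t) x then 1 else 0))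
    (hswitch : ∀ x,
      (∑ t ∈ Finset.Icc 1 T, if S (t - 1) x ≠ S t x then (1 : ℝ) else 0)
        ≤ 8 * ε * Ti x / (1 - 8 * ε))
    (kl tv : ℝ)
    -- chain rule for the KL divergence between the observation laws
    (hchain : kl = ∑ t ∈ Finset.Icc 1 T, ∫ x, Dt t x ∂μ)
    -- Pinsker's inequality
    (hpinsker : tv ≤ Real.sqrt (kl / 2)) :
    tv ≤ (ε / σ) * Real.sqrt (2 * ω * ε * (∫ x, Ti x ∂μ) / (1 - 8 * ε)) :=
  kl_chain_tv_bound_general μ T ε σ ω hε0 hε hσ hω ρ hρ hwidth S Ti hTi_int Dt hDt_int hDt hswitch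
    kl tv hchain hpinsker
end
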